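/- Let p be an even positive integer, and define the polynomials G_n(p) ∈ ℝ[t] by G_0(p) = 1 and G_n(p) = (p/n) Σ_{k=1}^{n} (−1)^{k+1} B_k · G_{n−k}(p) for n ≥ 1, where B_k ∈ ℝ[t] is the k-th Bernoulli polynomial. Then G_{p+1}(p) is identically zero. -/

import Mathlib

/-!
Differentiating the recurrence with the Appell property `B_k' = k B_{k-1}` gives
`G_{n+1}' = (p - n) G_n`, so `G_{p+1}` is constant. The symmetry `B_k(1 - t) = (-1)^k B_k(t)`
passes through the recurrence to `G_n(1 - t) = (-1)^n G_n(t)`. For even `p`, the constant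
`G_{p+1}` thus equals its own negative.
-/

open Finset Polynomial

/-- The `k`-th Bernoulli polynomial as a real polynomial
(generating function `u e^{tu}/(e^u - 1)`, so `bernR 1 = X - 1/2`). -/
noncomputable def bernR (k : ℕ) : Polynomial ℝ :=
  (Polynomial.bernoulli k).map (algebraMap ℚ ℝ)

lemma bernR_zero : bernR 0 = 1 := by simp [bernR]

lemma derivative_bernR_add_one (k : ℕ) :
    derivative (bernR (k + 1)) = ((k : ℝ[X]) + 1) * bernR k := by
  simp [bernR, derivative_map, derivative_bernoulli_add_one]

lemma bernR_comp_one_sub_X (k : ℕ) : (bernR k).comp (1 - X) = (-1) ^ k * bernR k := by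
  simpa [bernR, Polynomial.map_comp] using
    congrArg (map (algebraMap ℚ ℝ)) (bernoulli_comp_one_sub_X k)

noncomputable def bernConv (G : ℕ → ℝ[X]) (n : ℕ) : ℝ[X] :=
  ∑ k ∈ range n, (-1) ^ k * bernR (k + 1) * G (n - 1 - k)

lemma sum_Icc_eq_bernConv (G : ℕ → ℝ[X]) (n : ℕ) :
    ∑ k ∈ Icc 1 n, (-1 : ℝ[X]) ^ (k + 1) * bernR k * G (n - k) = bernConv G n := by
  rw [← Ico_add_one_right_eq_Icc, sum_Ico_eq_sum_range, add_tsub_cancel_right, bernConv]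
  refine sum_congr rfl fun k _ => ?_
  rw [add_comm 1 k, Nat.sub_sub, add_comm 1 k]
  ring

lemma derivative_bernConv_succ {p : ℝ} {G : ℕ → ℝ[X]} {n : ℕ} (hG0 : derivative (G 0) = 0)
    (hG : ∀ j < n, derivative (G (j + 1)) = (C p - j) * G j) :
    derivative (bernConv G (n + 1)) = G n + (C p - n - 1) * bernConv G n := by
  have hterm : ∀ k ∈ range (n + 1),
      derivative ((-1) ^ k * bernR (k + 1) * G (n + 1 - 1 - k)) =
        (-1) ^ k * ((k : ℝ[X]) + 1) * bernR k * G (n - k) +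
          (-1) ^ k * bernR (k + 1) * derivative (G (n - k)) := by
    intro k _
    simp only [derivative_mul, derivative_pow, derivative_neg, derivative_one,
      derivative_bernR_add_one, Nat.add_sub_cancel]
    ring
  rw [bernConv, derivative_sum, sum_congr rfl hterm, sum_add_distrib, sum_range_succ',
    sum_range_succ, Nat.sub_self, hG0, bernConv, mul_sum]
  have hpair : ∀ i ∈ range n,
      (-1) ^ (i + 1) * (((i + 1 : ℕ) : ℝ[X]) + 1) * bernR (i + 1) * G (n - (i + 1)) +
          (-1) ^ i * bernR (i + 1) * derivative (G (n - i)) =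
        (C p - n - 1) * ((-1) ^ i * bernR (i + 1) * G (n - 1 - i)) := by
    intro i hi
    obtain ⟨j, rfl⟩ := Nat.exists_eq_add_of_lt (mem_range.mp hi)
    rw [show i + j + 1 - i = j + 1 by omega, show i + j + 1 - (i + 1) = j by omega,
      show i + j + 1 - 1 - i = j by omega, hG j (by omega)]
    push_cast
    ring
  rw [← sum_congr rfl hpair, sum_add_distrib, Nat.sub_zero, bernR_zero]
  push_cast
  ring

lemma bernConv_comp_one_sub_X {G : ℕ → ℝ[X]} {n : ℕ}
    (hG : ∀ j < n, (G j).comp (1 - X) = (-1) ^ j * G j) :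
    (bernConv G n).comp (1 - X) = (-1) ^ n * bernConv G n := by
  simp only [bernConv, Polynomial.sum_comp, mul_sum, mul_comp, pow_comp, neg_comp, one_comp,
    bernR_comp_one_sub_X]
  refine sum_congr rfl fun k hk => ?_
  have hk : k < n := mem_range.mp hk
  have hsign : (-1 : ℝ[X]) ^ (k + 1) * (-1) ^ (n - 1 - k) = (-1) ^ n := by
    rw [← pow_add]; congr 1; omega
  rw [hG _ (by omega)]
  linear_combination (-1) ^ k * bernR (k + 1) * G (n - 1 - k) * hsign

section

variable {p : ℝ} {G : ℕ → ℝ[X]}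

-- With the denominator `n` cleared, the recurrence also holds at `n = 0` (both sides vanish).
lemma natCast_mul_eq_C_mul_bernConv
    (hG : ∀ n : ℕ, 1 ≤ n →
      G n = C (p / n) * ∑ k ∈ Icc 1 n, (-1 : ℝ[X]) ^ (k + 1) * bernR k * G (n - k))
    (n : ℕ) : (n : ℝ[X]) * G n = C p * bernConv G n := by
  rcases Nat.eq_zero_or_pos n with rfl | hn
  · simp [bernConv]
  · rw [hG n hn, sum_Icc_eq_bernConv, ← mul_assoc, ← C_eq_natCast, ← C_mul,
      mul_div_cancel₀ _ (by positivity)]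

lemma derivative_succ_of_natCast_mul_eq (hG0 : G 0 = 1)
    (hrec : ∀ n : ℕ, (n : ℝ[X]) * G n = C p * bernConv G n) (n : ℕ) :
    derivative (G (n + 1)) = (C p - n) * G n := by
  induction n using Nat.strong_induction_on with
  | _ n ih =>
  have hS := derivative_bernConv_succ (by simp [hG0]) ih
  have h := congrArg derivative (hrec (n + 1))
  rw [derivative_natCast_mul, derivative_C_mul, hS] at h
  refine mul_left_cancel₀ (Nat.cast_add_one_ne_zero n : ((n : ℝ[X]) + 1) ≠ 0) ?_
  push_cast at h
  linear_combination h - (C p - n - 1) * hrec n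

lemma comp_one_sub_X_of_natCast_mul_eq (hG0 : G 0 = 1)
    (hrec : ∀ n : ℕ, (n : ℝ[X]) * G n = C p * bernConv G n) (n : ℕ) :
    (G n).comp (1 - X) = (-1) ^ n * G n := by
  induction n using Nat.strong_induction_on with
  | _ n ih =>
  rcases n with _ | n
  · simp [hG0]
  have h := congrArg (·.comp (1 - X)) (hrec (n + 1))
  simp only [mul_comp, natCast_comp, C_comp, bernConv_comp_one_sub_X ih] at h
  refine mul_left_cancel₀ (Nat.cast_add_one_ne_zero n : ((n : ℝ[X]) + 1) ≠ 0) ?_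
  have hn := hrec (n + 1)
  push_cast at h hn
  linear_combination h - (-1) ^ (n + 1) * hn

end

lemma eq_zero_of_derivative_eq_zero_of_comp_eq_neg {R : Type*} [CommRing R] [IsDomain R]
    [CharZero R] {f q : R[X]} (hd : derivative f = 0) (hf : f.comp q = -f) : f = 0 := by
  rw [eq_C_of_derivative_eq_zero hd, C_comp, ← eq_C_of_derivative_eq_zero hd] at hf
  exact self_eq_neg.mp hf

theorem G_succ_eq_zero_of_even
    (p : ℕ) (hpe : Even p)
    (G : ℕ → Polynomial ℝ) (hG0 : G 0 = 1)
    (hG : ∀ n : ℕ, 1 ≤ n →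
      G n = Polynomial.C ((p : ℝ) / (n : ℝ)) *
        ∑ k ∈ Finset.Icc 1 n, (-1 : Polynomial ℝ) ^ (k + 1) * bernR k * G (n - k)) :
    G (p + 1) = 0 := by
  have hrec := natCast_mul_eq_C_mul_bernConv hG
  apply eq_zero_of_derivative_eq_zero_of_comp_eq_neg (q := 1 - X)
  · simp [derivative_succ_of_natCast_mul_eq hG0 hrec]
  · rw [comp_one_sub_X_of_natCast_mul_eq hG0 hrec, hpe.add_one.neg_one_pow, neg_one_mul]
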